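/- Every Bell class state ρ on ℂ^d⊗ℂ^d satisfies the perfect correlation form of the original Bell inequality: for all Hermitian matrices W₁, W̃₁, W₂, W̃₂ on ℂ^d with operator norms at most 1, |tr[ρ(W₁⊗W₂)] − tr[ρ(W₁⊗W̃₂)]| ≤ 1 − tr[ρ(W₂⊗W̃₂)] and |tr[ρ(W₁⊗W₂)] − tr[ρ(W̃₁⊗W₂)]| ≤ 1 − tr[ρ(W₁⊗W̃₁)]. -/

import Mathlib

open Matrix
open scoped Kronecker ComplexOrder

namespace BellPaper

variable {α β γ : Type*} [Fintype α] [Fintype β] [Fintype γ]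

/-- Partial trace over the first factor of a threefold tensor product. -/
noncomputable def ptr1 (T : Matrix ((α × β) × γ) ((α × β) × γ) ℂ) :
    Matrix (β × γ) (β × γ) ℂ :=
  fun p q => ∑ i : α, T ((i, p.1), p.2) ((i, q.1), q.2)

/-- Partial trace over the second factor of a threefold tensor product. -/
noncomputable def ptr2 (T : Matrix ((α × β) × γ) ((α × β) × γ) ℂ) :
    Matrix (α × γ) (α × γ) ℂ :=
  fun p q => ∑ j : β, T ((p.1, j), p.2) ((q.1, j), q.2)

/-- Partial trace over the third factor of a threefold tensor product. -/
noncomputable def ptr3 (T : Matrix ((α × β) × γ) ((α × β) × γ) ℂ) :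
    Matrix (α × β) (α × β) ℂ :=
  fun p q => ∑ k : γ, T (p, k) (q, k)

/-- Partial trace over the second factor of a twofold tensor product. -/
noncomputable def ptrB (M : Matrix (α × β) (α × β) ℂ) : Matrix α α ℂ :=
  fun i i' => ∑ j : β, M (i, j) (i', j)

/-- A density matrix: positive semidefinite with unit trace. -/
def IsDensityMatrix {n : Type*} [Fintype n] (ρ : Matrix n n ℂ) : Prop :=
  ρ.PosSemidef ∧ ρ.trace = 1

/-- Source-operator of type `T₁₂₂` for a state on ℂ^{d₁}⊗ℂ^{d₂}. -/
def IsSource122 {d₁ d₂ : ℕ} (ρ : Matrix (Fin d₁ × Fin d₂) (Fin d₁ × Fin d₂) ℂ)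
    (T : Matrix ((Fin d₁ × Fin d₂) × Fin d₂) ((Fin d₁ × Fin d₂) × Fin d₂) ℂ) : Prop :=
  T.IsHermitian ∧ ptr2 T = ρ ∧ ptr3 T = ρ

/-- Source-operator of type `T₁₁₂` for a state on ℂ^{d₁}⊗ℂ^{d₂}. -/
def IsSource112 {d₁ d₂ : ℕ} (ρ : Matrix (Fin d₁ × Fin d₂) (Fin d₁ × Fin d₂) ℂ)
    (S : Matrix ((Fin d₁ × Fin d₁) × Fin d₂) ((Fin d₁ × Fin d₁) × Fin d₂) ℂ) : Prop :=
  S.IsHermitian ∧ ptr1 S = ρ ∧ ptr2 S = ρ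

/-- A DSO state: a density matrix admitting a positive semidefinite source-operator. -/
def IsDSO {d₁ d₂ : ℕ} (ρ : Matrix (Fin d₁ × Fin d₂) (Fin d₁ × Fin d₂) ℂ) : Prop :=
  IsDensityMatrix ρ ∧
    ((∃ T, T.PosSemidef ∧ IsSource122 ρ T) ∨ (∃ S, S.PosSemidef ∧ IsSource112 ρ S))

/-- A Bell class state: a density matrix admitting a density source-operator with the
special dilation property (all three partial traces equal the state). -/
def IsBellClass {d : ℕ} (ρ : Matrix (Fin d × Fin d) (Fin d × Fin d) ℂ) : Prop :=
  IsDensityMatrix ρ ∧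
    ∃ T : Matrix ((Fin d × Fin d) × Fin d) ((Fin d × Fin d) × Fin d) ℂ,
      T.PosSemidef ∧ ptr1 T = ρ ∧ ptr2 T = ρ ∧ ptr3 T = ρ

/-- The operator (spectral) norm of a matrix acting on a Euclidean space. -/
noncomputable def opNorm {n : Type*} [Fintype n] [DecidableEq n] (W : Matrix n n ℂ) : ℝ :=
  ‖Matrix.toEuclideanCLM (𝕜 := ℂ) W‖

/-- The swap (permutation) operator `V_d` on ℂ^d ⊗ ℂ^d. -/
noncomputable def swapMat (d : ℕ) : Matrix (Fin d × Fin d) (Fin d × Fin d) ℂ :=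
  fun p q => if p.1 = q.2 ∧ p.2 = q.1 then 1 else 0

/-- The Werner state on ℂ^d ⊗ ℂ^d. -/
noncomputable def werner (d : ℕ) : Matrix (Fin d × Fin d) (Fin d × Fin d) ℂ :=
  (((d : ℂ) + 1) / (d : ℂ) ^ 3) • (1 : Matrix (Fin d × Fin d) (Fin d × Fin d) ℂ)
    - ((d : ℂ) ^ 2)⁻¹ • swapMat d

/-- The triple of indices of a point of the threefold product. -/
def triple {d : ℕ} (p : (Fin d × Fin d) × Fin d) : Fin 3 → Fin d := ![p.1.1, p.1.2, p.2]

/-- The unitary permuting the three tensor factors of ℂ^d ⊗ ℂ^d ⊗ ℂ^d according to π. -/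
noncomputable def permMat (d : ℕ) (π : Equiv.Perm (Fin 3)) :
    Matrix ((Fin d × Fin d) × Fin d) ((Fin d × Fin d) × Fin d) ℂ :=
  fun p q => if ∀ i, triple p (π i) = triple q i then 1 else 0

/-- The antisymmetrization projection `Q_d^{(-)}` on ℂ^d ⊗ ℂ^d ⊗ ℂ^d. -/
noncomputable def antisym (d : ℕ) :
    Matrix ((Fin d × Fin d) × Fin d) ((Fin d × Fin d) × Fin d) ℂ :=
  (6 : ℂ)⁻¹ • ∑ π : Equiv.Perm (Fin 3), (((Equiv.Perm.sign π : ℤ) : ℂ)) • permMat d π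

/-- Tensor product of two vectors. -/
def tens {m n : Type*} (u : m → ℂ) (v : n → ℂ) : m × n → ℂ := fun p => u p.1 * v p.2

/-- The rank-one operator |v⟩⟨v|. -/
noncomputable def outer {n : Type*} (v : n → ℂ) : Matrix n n ℂ :=
  Matrix.vecMulVec v (star v)

/-!
A Bell class state `ρ` is the common two-party marginal of a positive semidefinite `T` on three
copies of `ℂ^d`. For Hermitian contractions `X, Y, Z` the matrices `1 ± X`, `1 ± Y`, `1 ± Z` are
positive semidefinite, hence so is
`(1 + X) ⊗ (1 + Y) ⊗ (1 + Z) + (1 - X) ⊗ (1 - Y) ⊗ (1 - Z) = 2 (1 + X⊗Y⊗1 + X⊗1⊗Z + 1⊗Y⊗Z)`,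
the odd-degree terms cancelling. Its expectation in `T` gives
`1 + ⟨X⊗Y⟩ + ⟨X⊗Z⟩ + ⟨Y⊗Z⟩ ≥ 0`, every pair correlation being one of `ρ` because all three
partial traces of `T` equal `ρ`. Flipping the sign of one observable gives the two one-sided bounds
of each Bell inequality.
-/

section Contraction

variable {n : Type*} [Fintype n] [DecidableEq n]

def IsHermitianContraction (W : Matrix n n ℂ) : Prop :=
  W.IsHermitian ∧ opNorm W ≤ 1

theorem IsHermitianContraction.neg {W : Matrix n n ℂ} (hW : IsHermitianContraction W) :
    IsHermitianContraction (-W) :=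
  ⟨hW.1.neg, by rw [opNorm, map_neg, norm_neg]; exact hW.2⟩

open scoped Matrix.Norms.L2Operator MatrixOrder in
theorem IsHermitianContraction.posSemidef_one_add {W : Matrix n n ℂ}
    (hW : IsHermitianContraction W) : (1 + W).PosSemidef := by
  have hnorm : ‖W‖ ≤ 1 := hW.2
  have hlower : -(algebraMap ℝ (Matrix n n ℂ) ‖W‖) ≤ W :=
    hW.1.isSelfAdjoint.neg_algebraMap_norm_le_self
  have hnorm_le : algebraMap ℝ (Matrix n n ℂ) ‖W‖ ≤ 1 := by
    simpa using algebraMap_mono (Matrix n n ℂ) hnorm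
  rw [← nonneg_iff_posSemidef]
  calc (0 : Matrix n n ℂ) = 1 + -1 := by simp
    _ ≤ 1 + W := by gcongr; exact (neg_le_neg hnorm_le).trans hlower

theorem IsHermitianContraction.posSemidef_one_sub {W : Matrix n n ℂ}
    (hW : IsHermitianContraction W) : (1 - W).PosSemidef := by
  simpa only [sub_eq_add_neg] using hW.neg.posSemidef_one_add

open scoped MatrixOrder in
theorem _root_.Matrix.PosSemidef.trace_mul_nonneg {A B : Matrix n n ℂ} (hA : A.PosSemidef)
    (hB : B.PosSemidef) : 0 ≤ (A * B).trace := by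
  obtain ⟨C, rfl⟩ := CStarAlgebra.nonneg_iff_eq_star_mul_self.mp hB.nonneg
  rw [star_eq_conjTranspose, ← Matrix.mul_assoc, trace_mul_cycle]
  exact (hA.mul_mul_conjTranspose_same C).trace_nonneg

end Contraction

theorem _root_.Matrix.neg_kronecker {R l m n p : Type*} [Mul R] [HasDistribNeg R]
    (A : Matrix l m R) (B : Matrix n p R) :
    (-A) ⊗ₖ B = -(A ⊗ₖ B) := by
  ext; simp

theorem _root_.Matrix.kronecker_neg {R l m n p : Type*} [Mul R] [HasDistribNeg R]
    (A : Matrix l m R) (B : Matrix n p R) :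
    A ⊗ₖ (-B) = -(A ⊗ₖ B) := by
  ext; simp

section PartialTrace

variable (T : Matrix ((α × β) × γ) ((α × β) × γ) ℂ)

theorem trace_ptr3_mul [DecidableEq γ] (X : Matrix (α × β) (α × β) ℂ) :
    (ptr3 T * X).trace = (T * (X ⊗ₖ (1 : Matrix γ γ ℂ))).trace := by
  simp only [trace, diag_apply, mul_apply, ptr3, Finset.sum_mul, Fintype.sum_prod_type,
    kroneckerMap_apply, one_apply, mul_ite, mul_one, mul_zero, Finset.sum_ite_eq',
    Finset.mem_univ, if_true]
  exact Finset.sum_congr rfl fun _ _ => Finset.sum_congr rfl fun _ _ =>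
    (Finset.sum_comm.trans <| Finset.sum_congr rfl fun _ _ => Finset.sum_comm).symm

theorem trace_ptr2_mul_kronecker [DecidableEq β] (X : Matrix α α ℂ) (Z : Matrix γ γ ℂ) :
    (ptr2 T * (X ⊗ₖ Z)).trace = (T * ((X ⊗ₖ (1 : Matrix β β ℂ)) ⊗ₖ Z)).trace := by
  simp only [trace, diag_apply, mul_apply, ptr2, kroneckerMap_apply, Finset.sum_mul,
    Fintype.sum_prod_type, one_apply, mul_ite, mul_one, mul_zero, ite_mul, zero_mul,
    Finset.sum_ite_irrel, Finset.sum_const_zero, Finset.sum_ite_eq', Finset.mem_univ, if_true]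
  exact Finset.sum_congr rfl fun _ _ => (Finset.sum_comm.trans <|
    Finset.sum_congr rfl fun _ _ => Finset.sum_comm.trans <|
      Finset.sum_congr rfl fun _ _ => Finset.sum_comm).symm

theorem trace_ptr1_mul_kronecker [DecidableEq α] (Y : Matrix β β ℂ) (Z : Matrix γ γ ℂ) :
    (ptr1 T * (Y ⊗ₖ Z)).trace = (T * (((1 : Matrix α α ℂ) ⊗ₖ Y) ⊗ₖ Z)).trace := by
  simp only [trace, diag_apply, mul_apply, ptr1, kroneckerMap_apply, Finset.sum_mul,
    Fintype.sum_prod_type, one_apply, ite_mul, one_mul, zero_mul, mul_ite, mul_zero,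
    Finset.sum_ite_irrel, Finset.sum_const_zero, Finset.sum_ite_eq', Finset.mem_univ, if_true]
  exact (Finset.sum_comm.trans <| Finset.sum_congr rfl fun _ _ => Finset.sum_comm.trans <|
    Finset.sum_congr rfl fun _ _ => Finset.sum_comm.trans <|
      Finset.sum_congr rfl fun _ _ => Finset.sum_comm).symm

end PartialTrace

variable [DecidableEq α] [DecidableEq β] [DecidableEq γ] in
theorem trace_pair_correlations_nonneg
    {T : Matrix ((α × β) × γ) ((α × β) × γ) ℂ} (hT : T.PosSemidef)
    {X : Matrix α α ℂ} {Y : Matrix β β ℂ} {Z : Matrix γ γ ℂ} (hX : IsHermitianContraction X)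
    (hY : IsHermitianContraction Y) (hZ : IsHermitianContraction Z) :
    0 ≤ T.trace + (T * ((X ⊗ₖ Y) ⊗ₖ (1 : Matrix γ γ ℂ))).trace
      + (T * ((X ⊗ₖ (1 : Matrix β β ℂ)) ⊗ₖ Z)).trace
      + (T * (((1 : Matrix α α ℂ) ⊗ₖ Y) ⊗ₖ Z)).trace := by
  set P := ((1 + X) ⊗ₖ (1 + Y)) ⊗ₖ (1 + Z)
  set Q := ((1 - X) ⊗ₖ (1 - Y)) ⊗ₖ (1 - Z)
  have hPQ : (P + Q).PosSemidef :=
    ((hX.posSemidef_one_add.kronecker hY.posSemidef_one_add).kronecker hZ.posSemidef_one_add).add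
      ((hX.posSemidef_one_sub.kronecker hY.posSemidef_one_sub).kronecker hZ.posSemidef_one_sub)
  have hsum : P + Q = (2 : ℂ) • (((1 : Matrix α α ℂ) ⊗ₖ (1 : Matrix β β ℂ)) ⊗ₖ (1 : Matrix γ γ ℂ)
      + (X ⊗ₖ Y) ⊗ₖ (1 : Matrix γ γ ℂ)
      + (X ⊗ₖ (1 : Matrix β β ℂ)) ⊗ₖ Z + ((1 : Matrix α α ℂ) ⊗ₖ Y) ⊗ₖ Z) := by
    ext ⟨⟨i, j⟩, k⟩ ⟨⟨i', j'⟩, k'⟩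
    simp only [P, Q, Matrix.add_apply, Matrix.sub_apply, Matrix.smul_apply, kroneckerMap_apply,
      smul_eq_mul]
    ring
  have htwice := hT.trace_mul_nonneg hPQ
  rw [hsum, one_kronecker_one, one_kronecker_one, Matrix.mul_smul, trace_smul, smul_eq_mul]
    at htwice
  have h := mul_nonneg (by positivity : (0 : ℂ) ≤ 2⁻¹) htwice
  rwa [inv_mul_cancel_left₀ two_ne_zero, Matrix.mul_add, Matrix.mul_add, Matrix.mul_add,
    Matrix.mul_one, trace_add, trace_add, trace_add] at h

theorem IsBellClass.one_add_pair_correlations_nonneg {d : ℕ}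
    {ρ : Matrix (Fin d × Fin d) (Fin d × Fin d) ℂ} (hρ : IsBellClass ρ)
    {X Y Z : Matrix (Fin d) (Fin d) ℂ} (hX : IsHermitianContraction X)
    (hY : IsHermitianContraction Y) (hZ : IsHermitianContraction Z) :
    0 ≤ 1 + (ρ * (X ⊗ₖ Y)).trace + (ρ * (X ⊗ₖ Z)).trace + (ρ * (Y ⊗ₖ Z)).trace := by
  obtain ⟨⟨-, htr⟩, T, hT, h₁, h₂, h₃⟩ := hρ
  have htrT : T.trace = 1 := by
    rw [← htr, ← h₃, ← Matrix.mul_one (ptr3 T), trace_ptr3_mul, one_kronecker_one,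
      Matrix.mul_one]
  have := trace_pair_correlations_nonneg hT hX hY hZ
  rwa [← trace_ptr3_mul, ← trace_ptr2_mul_kronecker, ← trace_ptr1_mul_kronecker, h₁, h₂, h₃,
    htrT] at this

theorem _root_.Complex.norm_le_one_sub_re {w z : ℂ} (h₁ : 0 ≤ 1 - w + z)
    (h₂ : 0 ≤ 1 - w - z) : ‖z‖ ≤ 1 - w.re := by
  rw [Complex.le_def] at h₁ h₂
  simp only [Complex.zero_re, Complex.zero_im, Complex.add_re, Complex.add_im, Complex.sub_re,
    Complex.sub_im, Complex.one_re, Complex.one_im] at h₁ h₂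
  rw [← Complex.abs_re_eq_norm.mpr (by linarith), abs_le]
  constructor <;> linarith

/-- every Bell class state satisfies the perfect correlation form (41) of
the original Bell inequality. -/
theorem bell_class_bell_inequality {d : ℕ}
    (ρ : Matrix (Fin d × Fin d) (Fin d × Fin d) ℂ) (hρ : IsBellClass ρ)
    (W₁ W₁' W₂ W₂' : Matrix (Fin d) (Fin d) ℂ)
    (hW₁ : W₁.IsHermitian) (hW₁' : W₁'.IsHermitian)
    (hW₂ : W₂.IsHermitian) (hW₂' : W₂'.IsHermitian)
    (hn₁ : opNorm W₁ ≤ 1) (hn₁' : opNorm W₁' ≤ 1)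
    (hn₂ : opNorm W₂ ≤ 1) (hn₂' : opNorm W₂' ≤ 1) :
    ‖(ρ * (W₁ ⊗ₖ W₂)).trace - (ρ * (W₁ ⊗ₖ W₂')).trace‖
      ≤ 1 - ((ρ * (W₂ ⊗ₖ W₂')).trace).re
    ∧ ‖(ρ * (W₁ ⊗ₖ W₂)).trace - (ρ * (W₁' ⊗ₖ W₂)).trace‖
      ≤ 1 - ((ρ * (W₁ ⊗ₖ W₁')).trace).re := by
  have h₁ : IsHermitianContraction W₁ := ⟨hW₁, hn₁⟩
  have h₁' : IsHermitianContraction W₁' := ⟨hW₁', hn₁'⟩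
  have h₂ : IsHermitianContraction W₂ := ⟨hW₂, hn₂⟩
  have h₂' : IsHermitianContraction W₂' := ⟨hW₂', hn₂'⟩
  constructor
  · refine Complex.norm_le_one_sub_re ?_ ?_
    · convert hρ.one_add_pair_correlations_nonneg h₁ h₂ h₂'.neg using 1
      simp only [kronecker_neg, Matrix.mul_neg, trace_neg]; ring
    · convert hρ.one_add_pair_correlations_nonneg h₁ h₂.neg h₂' using 1
      simp only [neg_kronecker, kronecker_neg, Matrix.mul_neg, trace_neg]; ring
  · refine Complex.norm_le_one_sub_re ?_ ?_
    · convert hρ.one_add_pair_correlations_nonneg h₁ h₁'.neg h₂ using 1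
      simp only [neg_kronecker, kronecker_neg, Matrix.mul_neg, trace_neg]; ring
    · convert hρ.one_add_pair_correlations_nonneg h₁.neg h₁' h₂ using 1
      simp only [neg_kronecker, Matrix.mul_neg, trace_neg]; ring

end BellPaper
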